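/- arXiv:1510.00059 — 4 statements merged into one kernel-verified Lean document; each statement's English description precedes it below -/
import Mathlib

section
/- Let 0 < β₁ < β₂ and let L ≥ 2β₂ − β₁. Let X be uniformly distributed on [−L, L]. Then the conditional variance of X given X ∈ (β₁, 2β₂ − β₁] is strictly smaller than the conditional variance of X given X ∈ [−β₂, −β₁) ∪ (β₁, β₂]; explicitly, Var(X | X ∈ (β₁, 2β₂ − β₁]) = (β₂ − β₁)²/3 < (β₁² + β₁β₂ + β₂²)/3 = Var(X | X ∈ [−β₂, −β₁) ∪ (β₁, β₂]). -/
/-!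
Conditioning the uniform law on `[-L, L]` on a subset `T` gives the normalized Lebesgue
measure on `T`, whose variance is read off the first two moments of `T`. The interval of
length `2 (β₂ - β₁)` has variance `(2 (β₂ - β₁))² / 12`; the symmetric set has mean zero and
second moment `(β₁² + β₁ β₂ + β₂²) / 3`. The two differ by `β₁ β₂ > 0`.
-/

open MeasureTheory ProbabilityTheory Set

namespace ProbabilityTheory

variable {Ω : Type*} [MeasurableSpace Ω] {μ : Measure Ω} {s t : Set Ω}

lemma cond_smul {c : ENNReal} (hc₀ : c ≠ 0) (hc : c ≠ ⊤) : (c • μ)[|s] = μ[|s] := by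
  rw [cond, cond, Measure.restrict_smul, Measure.smul_apply, smul_smul, smul_eq_mul,
    ENNReal.mul_inv (Or.inl hc₀) (Or.inl hc), mul_right_comm, ENNReal.inv_mul_cancel hc₀ hc,
    one_mul]

lemma cond_restrict_of_subset (ht : MeasurableSet t) (hts : t ⊆ s) :
    (μ.restrict s)[|t] = μ[|t] := by
  rw [cond, cond, Measure.restrict_apply ht, inter_eq_left.mpr hts, Measure.restrict_restrict ht,
    inter_eq_left.mpr hts]

lemma integral_cond {E : Type*} [NormedAddCommGroup E] [NormedSpace ℝ E] (f : Ω → E) :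
    ∫ x, f x ∂μ[|s] = (μ.real s)⁻¹ • ∫ x in s, f x ∂μ := by
  rw [cond, integral_smul_measure, ENNReal.toReal_inv, measureReal_def]

end ProbabilityTheory

lemma variance_id_cond {μ : Measure ℝ} [IsFiniteMeasureOnCompacts μ] {T : Set ℝ}
    (hT : MeasurableSet T) (hbdd : Bornology.IsBounded T) (h0 : μ.real T ≠ 0) :
    variance id (μ[|T]) =
      (μ.real T)⁻¹ * (∫ x in T, x ^ 2 ∂μ) - ((μ.real T)⁻¹ * ∫ x in T, x ∂μ) ^ 2 := by
  have hfin := (hbdd.measure_lt_top (μ := μ)).ne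
  have :=
    cond_isProbabilityMeasure_of_finite ((measureReal_ne_zero_iff hfin).1 h0) hfin
  obtain ⟨C, hC⟩ := hbdd.exists_norm_le
  have hmem : MemLp id 2 (μ[|T]) :=
    (memLp_top_of_bound aestronglyMeasurable_id C
      ((ae_cond_mem hT).mono fun x hx ↦ hC x hx)).mono_exponent le_top
  rw [variance_eq_sub hmem, integral_cond, integral_cond]
  simp only [smul_eq_mul, Pi.pow_apply, id_eq]

lemma setIntegral_Ioc_pow {a b : ℝ} (hab : a ≤ b) (n : ℕ) :
    ∫ x in Ioc a b, x ^ n = (b ^ (n + 1) - a ^ (n + 1)) / (n + 1) := by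
  rw [← intervalIntegral.integral_of_le hab, integral_pow]

lemma setIntegral_Ico_union_Ioc_pow {a b c d : ℝ} (hab : a ≤ b) (hbc : b ≤ c) (hcd : c ≤ d)
    (n : ℕ) : ∫ x in Ico a b ∪ Ioc c d, x ^ n =
      (b ^ (n + 1) - a ^ (n + 1) + (d ^ (n + 1) - c ^ (n + 1))) / (n + 1) := by
  have hdisj : Disjoint (Ico a b) (Ioc c d) :=
    disjoint_left.mpr fun x hx hx' ↦ (hx.2.trans_le hbc).not_gt hx'.1
  rw [setIntegral_union hdisj measurableSet_Ioc
      ((continuous_pow n).integrableOn_Icc.mono_set Ico_subset_Icc_self)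
      (continuous_pow n).integrableOn_Ioc,
    setIntegral_congr_set Ico_ae_eq_Ioc, setIntegral_Ioc_pow hab, setIntegral_Ioc_pow hcd, add_div]

lemma variance_id_cond_volume_Ioc {a b : ℝ} (hab : a < b) :
    variance id (volume[|Ioc a b]) = (b - a) ^ 2 / 12 := by
  have hvol : volume.real (Ioc a b) = b - a := by
    rw [Real.volume_real_Ioc, max_eq_left (by linarith)]
  have hba : b - a ≠ 0 := sub_ne_zero.mpr hab.ne'
  -- `← funext pow_one` turns the first moment `∫ x` into `∫ x ^ 1`.
  rw [variance_id_cond measurableSet_Ioc (Metric.isBounded_Ioc _ _) (hvol ▸ hba), hvol,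
    ← funext (pow_one (M := ℝ)), setIntegral_Ioc_pow hab.le 2, setIntegral_Ioc_pow hab.le 1]
  field_simp
  ring

lemma variance_id_cond_volume_Ico_neg_union_Ioc {a b : ℝ} (ha : 0 ≤ a) (hab : a < b) :
    variance id (volume[|Ico (-b) (-a) ∪ Ioc a b]) = (a ^ 2 + a * b + b ^ 2) / 3 := by
  have hvol : volume.real (Ico (-b) (-a) ∪ Ioc a b) = 2 * (b - a) := by
    rw [measureReal_union (disjoint_left.mpr fun x hx hx' ↦ by linarith [hx.2, hx'.1])
        measurableSet_Ioc measure_Ico_lt_top.ne measure_Ioc_lt_top.ne,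
      Real.volume_real_Ico, Real.volume_real_Ioc, max_eq_left (by linarith),
      max_eq_left (by linarith)]
    ring
  have hba : b - a ≠ 0 := sub_ne_zero.mpr hab.ne'
  rw [variance_id_cond (measurableSet_Ico.union measurableSet_Ioc)
      ((Metric.isBounded_Ico _ _).union (Metric.isBounded_Ioc _ _))
      (by rw [hvol]; exact mul_ne_zero two_ne_zero hba), hvol, ← funext (pow_one (M := ℝ)),
    setIntegral_Ico_union_Ioc_pow (by linarith) (by linarith) hab.le 2,
    setIntegral_Ico_union_Ioc_pow (by linarith) (by linarith) hab.le 1]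
  field_simp
  ring

theorem stmt_4 (L β₁ β₂ : ℝ) (h1 : 0 < β₁) (h2 : β₁ < β₂) (hL : 2*β₂ - β₁ ≤ L) :
    variance id
        (((ENNReal.ofReal (2*L))⁻¹ • volume.restrict (Set.Icc (-L) L))[|Set.Ioc β₁ (2*β₂ - β₁)])
      = (β₂ - β₁)^2 / 3 ∧
    variance id
        (((ENNReal.ofReal (2*L))⁻¹ • volume.restrict (Set.Icc (-L) L))[|Set.Ico (-β₂) (-β₁) ∪ Set.Ioc β₁ β₂])
      = (β₁^2 + β₁*β₂ + β₂^2) / 3 ∧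
    (β₂ - β₁)^2 / 3 < (β₁^2 + β₁*β₂ + β₂^2) / 3 := by
  have hc₀ : (ENNReal.ofReal (2 * L))⁻¹ ≠ 0 := ENNReal.inv_ne_zero.mpr ENNReal.ofReal_ne_top
  have hc : (ENNReal.ofReal (2 * L))⁻¹ ≠ ⊤ :=
    ENNReal.inv_ne_top.mpr (ENNReal.ofReal_pos.mpr (by linarith)).ne'
  refine ⟨?_, ?_, by nlinarith [mul_pos h1 (h1.trans h2)]⟩
  · rw [cond_smul hc₀ hc, cond_restrict_of_subset measurableSet_Ioc
      (Ioc_subset_Icc_self.trans (Icc_subset_Icc (by linarith) hL)),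
      variance_id_cond_volume_Ioc (by linarith)]
    ring
  · rw [cond_smul hc₀ hc, cond_restrict_of_subset (measurableSet_Ico.union measurableSet_Ioc)
      (union_subset (Ico_subset_Icc_self.trans (Icc_subset_Icc (by linarith) (by linarith)))
        (Ioc_subset_Icc_self.trans (Icc_subset_Icc (by linarith) (by linarith)))),
      variance_id_cond_volume_Ico_neg_union_Ioc h1.le h2]
end

section
/- Let p : ℝ → [0, ∞) be a probability density function that is symmetric and unimodal around zero, i.e., p(x) = p(−x) for all x and p(a) ≥ p(b) whenever |a| ≤ |b|. Let 0 ≤ a ≤ c, a < b, c < d be real numbers such that ∫ₐᵇ p(x) dx = ∫꜀ᵈ p(x) dx > 0. Then the conditional variance of a random variable X with density p over (a, b] is at most its conditional variance over (c, d]: (∫ₐᵇ x² p dx)/Q − ((∫ₐᵇ x p dx)/Q)² ≤ (∫꜀ᵈ x² p dx)/Q − ((∫꜀ᵈ x p dx)/Q)², where Q = ∫ₐᵇ p(x) dx. -/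
/-!
Both conditional laws are images of the uniform measure on `(0, Q]` under their quantile
functions `f` (for `(a, b]`) and `g` (for `(c, d]`), so `2 Q²` times either conditional variance
is the double integral of `(f u - f v)²`, resp. `(g u - g v)²`. Since `a ≤ c` we have `f ≤ g`, and
as `p` decreases on `[0, ∞)`, the quantile `g` grows at least as fast as `f`:
`f v - f u ≤ g v - g u` for `u ≤ v`. The double integrals then compare pointwise.
-/

open MeasureTheory Set

section Variance

variable {Ω : Type*} [MeasurableSpace Ω] {m : Measure Ω} [IsFiniteMeasure m] {φ ψ : Ω → ℝ}

lemma integral_sub_sq (hφ : MemLp φ 2 m) (x : ℝ) :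
    ∫ v, (x - φ v) ^ 2 ∂m = m.real univ * x ^ 2 - 2 * x * ∫ v, φ v ∂m + ∫ v, φ v ^ 2 ∂m := by
  have hlin : Integrable (fun v => 2 * x * φ v) m := (hφ.integrable one_le_two).const_mul _
  have hexp : (fun v => (x - φ v) ^ 2) = fun v => (x ^ 2 - 2 * x * φ v) + φ v ^ 2 := by
    funext v; ring
  rw [hexp, integral_add (f := fun v => x ^ 2 - 2 * x * φ v) ((integrable_const _).sub hlin)
      hφ.integrable_sq, integral_sub (integrable_const _) hlin, integral_const,
    integral_const_mul, smul_eq_mul]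

lemma integrable_integral_sub_sq (hφ : MemLp φ 2 m) :
    Integrable (fun u => ∫ v, (φ u - φ v) ^ 2 ∂m) m := by
  simp_rw [integral_sub_sq hφ]
  exact ((hφ.integrable_sq.const_mul _).sub
    (((hφ.integrable one_le_two).const_mul 2).mul_const _)).add (integrable_const _)

lemma integral_integral_sub_sq (hφ : MemLp φ 2 m) :
    ∫ u, ∫ v, (φ u - φ v) ^ 2 ∂m ∂m
      = 2 * (m.real univ * ∫ u, φ u ^ 2 ∂m - (∫ u, φ u ∂m) ^ 2) := by
  have hsq : Integrable (fun u => m.real univ * φ u ^ 2) m := hφ.integrable_sq.const_mul _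
  have hlin : Integrable (fun u => 2 * φ u * ∫ v, φ v ∂m) m :=
    ((hφ.integrable one_le_two).const_mul 2).mul_const _
  simp_rw [integral_sub_sq hφ]
  rw [integral_add (f := fun u => m.real univ * φ u ^ 2 - 2 * φ u * ∫ v, φ v ∂m) (hsq.sub hlin)
      (integrable_const _), integral_sub hsq hlin, integral_const_mul, integral_mul_const,
    integral_const_mul, integral_const, smul_eq_mul]
  ring

lemma integral_sq_div_sub_sq_le (hφ : MemLp φ 2 m) (hψ : MemLp ψ 2 m)
    (h : ∀ᵐ u ∂m, ∀ᵐ v ∂m, |φ u - φ v| ≤ |ψ u - ψ v|) :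
    (∫ u, φ u ^ 2 ∂m) / m.real univ - ((∫ u, φ u ∂m) / m.real univ) ^ 2
      ≤ (∫ u, ψ u ^ 2 ∂m) / m.real univ - ((∫ u, ψ u ∂m) / m.real univ) ^ 2 := by
  have hdouble : ∫ u, ∫ v, (φ u - φ v) ^ 2 ∂m ∂m ≤ ∫ u, ∫ v, (ψ u - ψ v) ^ 2 ∂m ∂m := by
    refine integral_mono_ae (integrable_integral_sub_sq hφ) (integrable_integral_sub_sq hψ) ?_
    filter_upwards [h] with u hu
    exact integral_mono_ae (((memLp_const _).sub hφ).integrable_sq)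
      (((memLp_const _).sub hψ).integrable_sq) (hu.mono fun v hv => sq_le_sq.2 hv)
  rw [integral_integral_sub_sq hφ, integral_integral_sub_sq hψ] at hdouble
  rcases eq_or_ne (m.real univ) 0 with h0 | h0
  · simp [h0]
  have key : ∀ X Y : ℝ, X / m.real univ - (Y / m.real univ) ^ 2
      = (m.real univ * X - Y ^ 2) / m.real univ ^ 2 := fun X Y => by field_simp
  rw [key, key]
  exact div_le_div_of_nonneg_right (by linarith) (sq_nonneg _)

end Variance

open intervalIntegral

lemma MeasureTheory.LocallyIntegrable.intervalIntegrable {p : ℝ → ℝ} (hp : LocallyIntegrable p)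
    (s t : ℝ) : IntervalIntegrable p volume s t :=
  (hp.integrableOn_isCompact isCompact_uIcc).intervalIntegrable

noncomputable def intervalCdf (p : ℝ → ℝ) (α β t : ℝ) : ℝ :=
  ∫ x in α..max α (min t β), p x

/-- The left-continuous inverse of `intervalCdf p α β` on `[α, β]`. Inserting `β` keeps the set
nonempty, so the value lies in `[α, β]` for every `u`, also for `u` above the total mass. -/
noncomputable def intervalQuantile (p : ℝ → ℝ) (α β u : ℝ) : ℝ :=
  sInf (insert β {t ∈ Icc α β | u ≤ intervalCdf p α β t})

section IntervalQuantile

variable {p : ℝ → ℝ} {α β s t u : ℝ}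

lemma integral_mono_right_of_nonneg (hp : LocallyIntegrable p) (hpos : ∀ x, 0 ≤ p x)
    (hαs : α ≤ s) (hst : s ≤ t) : ∫ x in α..s, p x ≤ ∫ x in α..t, p x :=
  integral_mono_interval le_rfl hαs hst (ae_of_all _ hpos) (hp.intervalIntegrable α t)

lemma intervalCdf_of_le (h : t ≤ α) : intervalCdf p α β t = 0 := by
  rw [intervalCdf, max_eq_left ((min_le_left _ _).trans h), integral_same]

lemma intervalCdf_of_mem (hαt : α ≤ t) (htβ : t ≤ β) :
    intervalCdf p α β t = ∫ x in α..t, p x := by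
  rw [intervalCdf, min_eq_left htβ, max_eq_right hαt]

lemma intervalCdf_of_ge (hαβ : α ≤ β) (h : β ≤ t) : intervalCdf p α β t = ∫ x in α..β, p x := by
  rw [intervalCdf, min_eq_right h, max_eq_right hαβ]

lemma intervalCdf_eq_setIntegral (t : ℝ) : intervalCdf p α β t = ∫ x in Ioc α (min t β), p x := by
  rcases le_total α (min t β) with h | h
  · rw [intervalCdf, max_eq_right h, integral_of_le h]
  · rw [intervalCdf, max_eq_left h, integral_same, Ioc_eq_empty (not_lt.2 h), setIntegral_empty]

lemma monotone_intervalCdf (hp : LocallyIntegrable p) (hpos : ∀ x, 0 ≤ p x) :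
    Monotone (intervalCdf p α β) := fun _ _ hst =>
  integral_mono_right_of_nonneg hp hpos (le_max_left _ _)
    (max_le_max le_rfl (min_le_min hst le_rfl))

lemma continuous_intervalCdf (hp : LocallyIntegrable p) : Continuous (intervalCdf p α β) :=
  (continuous_primitive hp.intervalIntegrable α).comp
    (continuous_const.max (continuous_id.min continuous_const))

lemma intervalCdf_le (hp : LocallyIntegrable p) (hpos : ∀ x, 0 ≤ p x) (hαβ : α ≤ β) (t : ℝ) :
    intervalCdf p α β t ≤ ∫ x in α..β, p x :=
  integral_mono_right_of_nonneg hp hpos (le_max_left _ _) (max_le hαβ (min_le_right _ _))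

lemma intervalCdf_le_integral (hp : LocallyIntegrable p) (hpos : ∀ x, 0 ≤ p x) (hαt : α ≤ t) :
    intervalCdf p α β t ≤ ∫ x in α..t, p x :=
  integral_mono_right_of_nonneg hp hpos (le_max_left _ _) (max_le hαt (min_le_left _ _))

lemma intervalCdf_sub_intervalCdf (hp : LocallyIntegrable p) (hαs : α ≤ s) (hst : s ≤ t)
    (htβ : t ≤ β) : intervalCdf p α β t - intervalCdf p α β s = ∫ x in s..t, p x := by
  rw [intervalCdf_of_mem (hαs.trans hst) htβ, intervalCdf_of_mem hαs (hst.trans htβ),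
    integral_interval_sub_left (hp.intervalIntegrable _ _) (hp.intervalIntegrable _ _)]

lemma intervalQuantile_mem_Icc (hαβ : α ≤ β) (u : ℝ) : intervalQuantile p α β u ∈ Icc α β := by
  have hsub : insert β {t ∈ Icc α β | u ≤ intervalCdf p α β t} ⊆ Icc α β :=
    insert_subset ⟨hαβ, le_rfl⟩ fun _ ht => ht.1
  exact ⟨le_csInf (insert_nonempty _ _) fun _ ht => (hsub ht).1,
    csInf_le ⟨α, fun _ ht => (hsub ht).1⟩ (mem_insert _ _)⟩

lemma monotone_intervalQuantile (hαβ : α ≤ β) : Monotone (intervalQuantile p α β) := by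
  intro u v huv
  refine csInf_le_csInf ⟨α, ?_⟩ (insert_nonempty _ _) (insert_subset_insert ?_)
  · exact forall_mem_insert.2 ⟨hαβ, fun _ ht => ht.1.1⟩
  · exact fun _ ht => ⟨ht.1, huv.trans ht.2⟩

lemma memLp_intervalQuantile (hαβ : α ≤ β) (m : Measure ℝ) [IsFiniteMeasure m]
    (r : ENNReal) : MemLp (intervalQuantile p α β) r m :=
  memLp_of_bounded (ae_of_all _ (intervalQuantile_mem_Icc hαβ))
    (monotone_intervalQuantile hαβ).measurable.aestronglyMeasurable r

lemma intervalQuantile_eq_csInf (hαβ : α ≤ β) (hu : u ≤ ∫ x in α..β, p x) :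
    intervalQuantile p α β u = sInf {t ∈ Icc α β | u ≤ intervalCdf p α β t} := by
  have hβ : β ∈ {t ∈ Icc α β | u ≤ intervalCdf p α β t} :=
    ⟨⟨hαβ, le_rfl⟩, by rwa [intervalCdf_of_ge hαβ le_rfl]⟩
  rw [intervalQuantile, insert_eq_of_mem hβ]

lemma le_intervalCdf_intervalQuantile (hp : LocallyIntegrable p) (hαβ : α ≤ β)
    (hu : u ≤ ∫ x in α..β, p x) : u ≤ intervalCdf p α β (intervalQuantile p α β u) := by
  have hclosed : IsClosed {t ∈ Icc α β | u ≤ intervalCdf p α β t} :=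
    isClosed_Icc.inter (isClosed_le continuous_const (continuous_intervalCdf hp))
  rw [intervalQuantile_eq_csInf hαβ hu]
  refine (hclosed.csInf_mem ?_ ⟨α, fun _ ht => ht.1.1⟩).2
  exact ⟨β, ⟨hαβ, le_rfl⟩, by rwa [intervalCdf_of_ge hαβ le_rfl]⟩

lemma intervalQuantile_le_iff (hp : LocallyIntegrable p) (hpos : ∀ x, 0 ≤ p x) (hαβ : α ≤ β)
    (hu : 0 < u) (huQ : u ≤ ∫ x in α..β, p x) :
    intervalQuantile p α β u ≤ t ↔ u ≤ intervalCdf p α β t := by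
  refine ⟨fun h => (le_intervalCdf_intervalQuantile hp hαβ huQ).trans
    (monotone_intervalCdf hp hpos h), fun h => ?_⟩
  rcases le_total β t with hβt | htβ
  · exact (intervalQuantile_mem_Icc hαβ u).2.trans hβt
  have hαt : α ≤ t := by
    by_contra! htα
    rw [intervalCdf_of_le htα.le] at h
    linarith
  rw [intervalQuantile_eq_csInf hαβ huQ]
  exact csInf_le ⟨α, fun _ ht => ht.1.1⟩ ⟨⟨hαt, htβ⟩, h⟩

lemma intervalCdf_intervalQuantile (hp : LocallyIntegrable p) (hpos : ∀ x, 0 ≤ p x)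
    (hαβ : α ≤ β) (hu : 0 < u) (huQ : u ≤ ∫ x in α..β, p x) :
    intervalCdf p α β (intervalQuantile p α β u) = u := by
  have hq := intervalQuantile_mem_Icc (p := p) hαβ u
  set q := intervalQuantile p α β u
  have hmem : u ∈ Icc (intervalCdf p α β α) (intervalCdf p α β q) :=
    ⟨(intervalCdf_of_le le_rfl).trans_le hu.le, le_intervalCdf_intervalQuantile hp hαβ huQ⟩
  obtain ⟨t, ht, htu⟩ := intermediate_value_Icc hq.1 (continuous_intervalCdf hp).continuousOn hmem
  have hqt : q ≤ t := (intervalQuantile_le_iff hp hpos hαβ hu huQ).2 htu.ge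
  rwa [le_antisymm ht.2 hqt] at htu

lemma withDensity_eq_map_intervalQuantile (hp : LocallyIntegrable p) (hpos : ∀ x, 0 ≤ p x)
    (hαβ : α ≤ β) :
    (volume.restrict (Ioc α β)).withDensity (fun x => ENNReal.ofReal (p x))
      = (volume.restrict (Ioc 0 (∫ x in α..β, p x))).map (intervalQuantile p α β) := by
  have hq := (monotone_intervalQuantile (p := p) hαβ).measurable
  have : IsFiniteMeasure ((volume.restrict (Ioc α β)).withDensity fun x => ENNReal.ofReal (p x)) :=
    isFiniteMeasure_withDensity_ofReal
      (hp.intervalIntegrable α β).1.2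
  refine Measure.ext_of_Iic _ _ fun t => ?_
  have hpre : intervalQuantile p α β ⁻¹' Iic t ∩ Ioc 0 (∫ x in α..β, p x)
      = Ioc 0 (intervalCdf p α β t) := by
    ext u
    simp only [mem_inter_iff, mem_preimage, mem_Iic, mem_Ioc]
    constructor
    · rintro ⟨hqt, hu, huQ⟩
      exact ⟨hu, (intervalQuantile_le_iff hp hpos hαβ hu huQ).1 hqt⟩
    · rintro ⟨hu, hut⟩
      have huQ := hut.trans (intervalCdf_le hp hpos hαβ t)
      exact ⟨(intervalQuantile_le_iff hp hpos hαβ hu huQ).2 hut, hu, huQ⟩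
  rw [withDensity_apply _ measurableSet_Iic, Measure.restrict_restrict measurableSet_Iic,
    inter_comm, Ioc_inter_Iic, ← ofReal_integral_eq_lintegral_ofReal
      (hp.intervalIntegrable _ _).1 (ae_of_all _ hpos), Measure.map_apply hq measurableSet_Iic,
    Measure.restrict_apply (hq measurableSet_Iic), hpre, Real.volume_Ioc, sub_zero,
    intervalCdf_eq_setIntegral, min_comm]

lemma intervalIntegral_mul_eq_integral_intervalQuantile (hp : LocallyIntegrable p)
    (hmeas : Measurable p) (hpos : ∀ x, 0 ≤ p x) (hαβ : α ≤ β) {φ : ℝ → ℝ} (hφ : Measurable φ) :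
    ∫ x in α..β, φ x * p x
      = ∫ u in Ioc 0 (∫ x in α..β, p x), φ (intervalQuantile p α β u) := by
  rw [← integral_map (monotone_intervalQuantile hαβ).measurable.aemeasurable
      hφ.aestronglyMeasurable, ← withDensity_eq_map_intervalQuantile hp hpos hαβ,
    integral_of_le hαβ, integral_withDensity_eq_integral_toReal_smul
      hmeas.ennreal_ofReal (ae_of_all _ fun _ => ENNReal.ofReal_lt_top)]
  refine integral_congr_ae (ae_of_all _ fun x => ?_)
  simp only [ENNReal.toReal_ofReal (hpos x), smul_eq_mul, mul_comm]

end IntervalQuantile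

section Antitone

variable {p : ℝ → ℝ} {a b c d s t u v : ℝ}

lemma eq_zero_of_intervalIntegral_eq_zero (hp : IntervalIntegrable p volume s t)
    (hpos : ∀ x, 0 ≤ p x) (hanti : AntitoneOn p (Ici 0)) (hs : 0 ≤ s) (hst : s < t)
    (h : ∫ x in s..t, p x = 0) {x : ℝ} (hx : t ≤ x) : p x = 0 := by
  obtain ⟨y, hy, hpy⟩ : ∃ y ∈ Ioo s t, p y = 0 := by
    by_contra! hne
    exact (intervalIntegral_pos_of_pos_on hp (fun y hy => (hpos y).lt_of_ne (hne y hy).symm)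
      hst).ne' h
  have hy0 : 0 ≤ y := hs.trans hy.1.le
  exact le_antisymm (hpy ▸ hanti hy0 (hy0.trans (hy.2.le.trans hx)) (hy.2.le.trans hx)) (hpos x)

/-- A flat piece of the cdf of a density that is antitone on `[0, ∞)` extends to the end of the
interval, so it can only occur at the total mass. -/
lemma lt_intervalCdf_of_intervalQuantile_lt (hp : LocallyIntegrable p) (hpos : ∀ x, 0 ≤ p x)
    (hanti : AntitoneOn p (Ici 0)) (ha : 0 ≤ a) (hab : a ≤ b) (hu : 0 < u)
    (huQ : u < ∫ x in a..b, p x) (ht : intervalQuantile p a b u < t) :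
    u < intervalCdf p a b t := by
  by_contra! htu
  have hq := intervalQuantile_mem_Icc (p := p) hab u
  set q := intervalQuantile p a b u
  have htb : t < b := by
    by_contra! hbt
    rw [intervalCdf_of_ge hab hbt] at htu
    linarith
  have hqt : ∫ x in q..t, p x = 0 := by
    have := intervalCdf_sub_intervalCdf hp hq.1 ht.le htb.le
    rw [intervalCdf_intervalQuantile hp hpos hab hu huQ.le] at this
    linarith [integral_nonneg (μ := volume) ht.le fun x _ => hpos x]
  have htail : ∫ x in t..b, p x = 0 := by
    rw [integral_congr (g := fun _ => 0) fun x hx => eq_zero_of_intervalIntegral_eq_zero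
      (hp.intervalIntegrable _ _) hpos hanti (ha.trans hq.1) ht hqt (uIcc_of_le htb.le ▸ hx).1]
    simp
  have := intervalCdf_sub_intervalCdf hp (hq.1.trans ht.le) htb.le le_rfl
  rw [htail, intervalCdf_of_ge hab le_rfl] at this
  linarith

lemma intervalCdf_le_intervalCdf (hp : LocallyIntegrable p) (hpos : ∀ x, 0 ≤ p x)
    (hac : a ≤ c) (hab : a ≤ b) (hcd : c ≤ d) (heq : ∫ x in a..b, p x = ∫ x in c..d, p x)
    (t : ℝ) : intervalCdf p c d t ≤ intervalCdf p a b t := by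
  rcases le_total t b with htb | hbt
  · rw [intervalCdf_eq_setIntegral, intervalCdf_eq_setIntegral, min_eq_left htb]
    exact setIntegral_mono_set (hp.intervalIntegrable _ _).1 (ae_of_all _ hpos)
      (Ioc_subset_Ioc hac (min_le_left _ _)).eventuallyLE
  · rw [intervalCdf_of_ge hab hbt, heq]
    exact intervalCdf_le hp hpos hcd t

lemma intervalQuantile_le_intervalQuantile (hp : LocallyIntegrable p) (hpos : ∀ x, 0 ≤ p x)
    (hac : a ≤ c) (hab : a ≤ b) (hcd : c ≤ d) (heq : ∫ x in a..b, p x = ∫ x in c..d, p x)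
    (hu : 0 < u) (huQ : u ≤ ∫ x in a..b, p x) :
    intervalQuantile p a b u ≤ intervalQuantile p c d u := by
  rw [intervalQuantile_le_iff hp hpos hab hu huQ]
  exact (le_intervalCdf_intervalQuantile hp hcd (heq ▸ huQ)).trans
    (intervalCdf_le_intervalCdf hp hpos hac hab hcd heq _)

/-- An integrated form of `g' = 1 / p ∘ g ≥ 1 / p ∘ f = f'`, where `f ≤ g` are the two quantile
functions: shifting `[f u, f v]` by `g u - f u` can only lose mass. -/
lemma intervalQuantile_sub_le_intervalQuantile_sub (hp : LocallyIntegrable p)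
    (hpos : ∀ x, 0 ≤ p x) (hanti : AntitoneOn p (Ici 0)) (ha : 0 ≤ a) (hac : a ≤ c)
    (hab : a ≤ b) (hcd : c ≤ d) (heq : ∫ x in a..b, p x = ∫ x in c..d, p x) (hu : 0 < u)
    (huv : u ≤ v) (hvQ : v < ∫ x in a..b, p x) :
    intervalQuantile p a b v - intervalQuantile p a b u
      ≤ intervalQuantile p c d v - intervalQuantile p c d u := by
  set f := intervalQuantile p a b
  set g := intervalQuantile p c d
  have hv : 0 < v := hu.trans_le huv
  have hfu := intervalQuantile_mem_Icc (p := p) hab u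
  have hfv := intervalQuantile_mem_Icc (p := p) hab v
  have hgu := intervalQuantile_mem_Icc (p := p) hcd u
  have hfg : f u ≤ g u :=
    intervalQuantile_le_intervalQuantile hp hpos hac hab hcd heq hu (huv.trans hvQ.le)
  have hfuv : f u ≤ f v := monotone_intervalQuantile hab huv
  set t := f v + (g u - f u)
  by_contra! hgt
  have hvt : v < intervalCdf p c d t := lt_intervalCdf_of_intervalQuantile_lt hp hpos hanti
    (ha.trans hac) hcd hv (heq ▸ hvQ) (by linarith)
  have htv : intervalCdf p c d t ≤ v := calc
    intervalCdf p c d t ≤ ∫ x in c..t, p x := intervalCdf_le_integral hp hpos (by linarith [hgu.1])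
    _ = intervalCdf p c d (g u) + ∫ x in g u..t, p x := by
      rw [intervalCdf_of_mem hgu.1 hgu.2, integral_add_adjacent_intervals
        (hp.intervalIntegrable _ _) (hp.intervalIntegrable _ _)]
    _ = u + ∫ x in f u..f v, p (x + (g u - f u)) := by
      rw [intervalCdf_intervalQuantile hp hpos hcd hu (heq ▸ huv.trans hvQ.le),
        integral_comp_add_right, add_sub_cancel]
    _ ≤ u + ∫ x in f u..f v, p x := by
      have hshift : IntervalIntegrable (fun x => p (x + (g u - f u))) volume (f u) (f v) := by
        simpa [t] using (hp.intervalIntegrable (f u + (g u - f u)) t).comp_add_right (g u - f u)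
      refine (add_le_add_iff_left u).2 (integral_mono_on hfuv hshift (hp.intervalIntegrable _ _)
        fun x hx => hanti ?_ ?_ (by linarith))
      · exact ha.trans (hfu.1.trans hx.1)
      · exact (ha.trans (hfu.1.trans hx.1)).trans (by linarith)
    _ = v := by
      rw [← intervalCdf_sub_intervalCdf hp hfu.1 hfuv hfv.2,
        intervalCdf_intervalQuantile hp hpos hab hu (huv.trans hvQ.le),
        intervalCdf_intervalQuantile hp hpos hab hv hvQ.le, add_sub_cancel]
  linarith

lemma abs_intervalQuantile_sub_le (hp : LocallyIntegrable p) (hpos : ∀ x, 0 ≤ p x)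
    (hanti : AntitoneOn p (Ici 0)) (ha : 0 ≤ a) (hac : a ≤ c) (hab : a ≤ b) (hcd : c ≤ d)
    (heq : ∫ x in a..b, p x = ∫ x in c..d, p x) (hu : u ∈ Ioo 0 (∫ x in a..b, p x))
    (hv : v ∈ Ioo 0 (∫ x in a..b, p x)) :
    |intervalQuantile p a b u - intervalQuantile p a b v|
      ≤ |intervalQuantile p c d u - intervalQuantile p c d v| := by
  wlog huv : u ≤ v generalizing u v
  · rw [abs_sub_comm, abs_sub_comm (intervalQuantile p c d u)]
    exact this hv hu (le_of_not_ge huv)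
  rw [abs_sub_comm, abs_of_nonneg (sub_nonneg.2 (monotone_intervalQuantile hab huv)),
    abs_sub_comm, abs_of_nonneg (sub_nonneg.2 (monotone_intervalQuantile hcd huv))]
  exact intervalQuantile_sub_le_intervalQuantile_sub hp hpos hanti ha hac hab hcd heq hu.1 huv hv.2

end Antitone

theorem stmt_7_general (p : ℝ → ℝ) (hmeas : Measurable p) (hpos : ∀ x, 0 ≤ p x)
    (hunimodal : ∀ a b : ℝ, |a| ≤ |b| → p b ≤ p a)
    (a b c d : ℝ) (ha : 0 ≤ a) (hac : a ≤ c) (hab : a < b) (hcd : c < d)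
    (heq : ∫ x in a..b, p x = ∫ x in c..d, p x)
    (hQ : 0 < ∫ x in a..b, p x) :
    (∫ x in a..b, x^2 * p x) / (∫ x in a..b, p x)
        - ((∫ x in a..b, x * p x) / (∫ x in a..b, p x))^2
      ≤ (∫ x in c..d, x^2 * p x) / (∫ x in a..b, p x)
        - ((∫ x in c..d, x * p x) / (∫ x in a..b, p x))^2 := by
  have hp : LocallyIntegrable p := (locallyIntegrable_const (p 0)).mono hmeas.aestronglyMeasurable
    (ae_of_all _ fun x => by
      simpa [abs_of_nonneg (hpos x), abs_of_nonneg (hpos 0)] using hunimodal 0 x (by simp))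
  have hanti : AntitoneOn p (Ici 0) := fun x hx y hy hxy =>
    hunimodal x y (by rwa [abs_of_nonneg hx, abs_of_nonneg (mem_Ici.1 hy)])
  set Q := ∫ x in a..b, p x
  have hmass : (volume.restrict (Ioc 0 Q)).real univ = Q := by simp [hQ.le]
  have hIoo : ∀ᵐ u ∂volume.restrict (Ioc 0 Q), u ∈ Ioo 0 Q := by
    rw [← Measure.restrict_congr_set Ioo_ae_eq_Ioc]
    exact ae_restrict_mem measurableSet_Ioo
  have hsq : Measurable fun x : ℝ => x ^ 2 := by fun_prop
  rw [intervalIntegral_mul_eq_integral_intervalQuantile hp hmeas hpos hab.le hsq,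
    intervalIntegral_mul_eq_integral_intervalQuantile hp hmeas hpos hab.le measurable_id',
    intervalIntegral_mul_eq_integral_intervalQuantile hp hmeas hpos hcd.le hsq,
    intervalIntegral_mul_eq_integral_intervalQuantile hp hmeas hpos hcd.le measurable_id',
    ← heq]
  have hdisp : ∀ᵐ u ∂volume.restrict (Ioc 0 Q), ∀ᵐ v ∂volume.restrict (Ioc 0 Q),
      |intervalQuantile p a b u - intervalQuantile p a b v|
        ≤ |intervalQuantile p c d u - intervalQuantile p c d v| := by
    filter_upwards [hIoo] with u hu
    filter_upwards [hIoo] with v hv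
    exact abs_intervalQuantile_sub_le hp hpos hanti ha hac hab.le hcd.le heq hu hv
  simpa only [hmass] using integral_sq_div_sub_sq_le
    (memLp_intervalQuantile hab.le _ 2) (memLp_intervalQuantile hcd.le _ 2) hdisp

theorem stmt_7 (p : ℝ → ℝ) (hmeas : Measurable p) (hpos : ∀ x, 0 ≤ p x)
    (hsymm : ∀ x, p (-x) = p x)
    (hunimodal : ∀ a b : ℝ, |a| ≤ |b| → p b ≤ p a)
    (hdens : ∫ x, p x = 1)
    (a b c d : ℝ) (ha : 0 ≤ a) (hac : a ≤ c) (hab : a < b) (hcd : c < d)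
    (heq : ∫ x in a..b, p x = ∫ x in c..d, p x)
    (hQ : 0 < ∫ x in a..b, p x) :
    (∫ x in a..b, x^2 * p x) / (∫ x in a..b, p x)
        - ((∫ x in a..b, x * p x) / (∫ x in a..b, p x))^2
      ≤ (∫ x in c..d, x^2 * p x) / (∫ x in a..b, p x)
        - ((∫ x in c..d, x * p x) / (∫ x in a..b, p x))^2 :=
  stmt_7_general p hmeas hpos hunimodal a b c d ha hac hab hcd heq hQ
end

section
/- Let p : ℝ → [0, ∞) be a continuous probability density and fix β₂ ∈ ℝ. For β < β₂ define q(β) = ∫_β^{β₂} p(x) dx and m(β) = ∫_β^{β₂} x·p(x) dx. Then at every β < β₂ with q(β) > 0, the function β ↦ ∫_β^{β₂} x² p(x) dx − m(β)²/q(β) is differentiable with derivative d/dβ [∫_β^{β₂} x² p(x) dx − m(β)²/q(β)] = −p(β)·(β − m(β)/q(β))². -/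
open MeasureTheory intervalIntegral

/-
With q, m and s := ∫_t^{β₂} x² p the zeroth, first and second moments of p over (t, β₂), the
fundamental theorem of calculus gives q' = -p(t), m' = -t p(t), s' = -t² p(t). The quotient rule
then turns (s - m²/q)' into -p(t) (t² - 2 t m/q + m²/q²) = -p(t) (t - m/q)².
-/

theorem Continuous.integral_hasDerivAt_left {f : ℝ → ℝ} (hf : Continuous f) (a b : ℝ) :
    HasDerivAt (fun t => ∫ x in t..b, f x) (-f a) a :=
  intervalIntegral.integral_hasDerivAt_left (hf.intervalIntegrable _ _)
    (hf.stronglyMeasurableAtFilter _ _) hf.continuousAt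

theorem hasDerivAt_sub_sq_div_of_moments {q m s : ℝ → ℝ} {a β : ℝ}
    (hq : HasDerivAt q (-a) β) (hm : HasDerivAt m (-(β * a)) β)
    (hs : HasDerivAt s (-(β ^ 2 * a)) β) (hq0 : q β ≠ 0) :
    HasDerivAt (fun t => s t - m t ^ 2 / q t) (-a * (β - m β / q β) ^ 2) β := by
  refine (hs.fun_sub ((hm.fun_pow 2).fun_div hq hq0)).congr_deriv ?_
  field_simp
  ring

theorem stmt_8_general (p : ℝ → ℝ) (hp : Continuous p)
    (β₂ β : ℝ) (hq : 0 < ∫ x in β..β₂, p x) :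
    HasDerivAt
      (fun t : ℝ => (∫ x in t..β₂, x^2 * p x)
        - (∫ x in t..β₂, x * p x)^2 / (∫ x in t..β₂, p x))
      (-(p β) * (β - (∫ x in β..β₂, x * p x) / (∫ x in β..β₂, p x))^2) β :=
  hasDerivAt_sub_sq_div_of_moments (hp.integral_hasDerivAt_left β β₂)
    ((continuous_id.mul hp).integral_hasDerivAt_left β β₂)
    (((continuous_pow 2).mul hp).integral_hasDerivAt_left β β₂) hq.ne'

theorem stmt_8 (p : ℝ → ℝ) (hp : Continuous p) (hpos : ∀ x, 0 ≤ p x)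
    (hdens : ∫ x, p x = 1)
    (β₂ β : ℝ) (hβ : β < β₂) (hq : 0 < ∫ x in β..β₂, p x) :
    HasDerivAt
      (fun t : ℝ => (∫ x in t..β₂, x^2 * p x)
        - (∫ x in t..β₂, x * p x)^2 / (∫ x in t..β₂, p x))
      (-(p β) * (β - (∫ x in β..β₂, x * p x) / (∫ x in β..β₂, p x))^2) β :=
  stmt_8_general p hp β₂ β hq
end

section
/- Let λ > 0, γ > 0 and 0 ≤ c₁ < c₂. Consider the system of equations in (β₁, β₂) with 0 ≤ β₁ < β₂, where Δβ = β₂ − β₁ and μ = β₁ + 1/λ − Δβ/(e^{λΔβ} − 1): (i) β₁² − (1/(1+γ))·(β₁ − μ)² = c₁ and (ii) (1/(1+γ))·(β₂ − μ)² = c₂ − c₁ with β₂ > μ. This system is equivalent to: Δβ·e^{λΔβ}/(e^{λΔβ} − 1) = 1/λ + √((c₂ − c₁)(1+γ)) and β₁ = √(c₁ + (1/(1+γ))·(Δβ − √((c₂ − c₁)(1+γ)))²), and it admits a unique solution (β₁, β₂) with β₁ ≥ 0 and Δβ > 0. -/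
/-!
Put `Δ = β₂ - β₁` and `a = β₂ - μ`. Then `β₁ - μ = a - Δ` and `a = Δ e^{λΔ}/(e^{λΔ} - 1) - 1/λ`,
so condition (ii) with `μ < β₂` says `a = √((c₂ - c₁)(1+γ))`, which is the equation for the gap `Δ`,
and (i) then solves for `β₁ ≥ 0`. The gap equation has exactly one positive solution because
`u ↦ u eᵘ/(eᵘ - 1)` is strictly increasing on `(0, ∞)` and maps `(0, ∞)` onto `(1, ∞)`.
-/

open Real Set

lemma hasDerivAt_mul_exp_div_exp_sub_one {x : ℝ} (hx : x ≠ 0) :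
    HasDerivAt (fun u => u * exp u / (exp u - 1))
      (exp x * (exp x - 1 - x) / (exp x - 1) ^ 2) x := by
  have hne : exp x - 1 ≠ 0 := sub_ne_zero.2 (exp_eq_one_iff x |>.not.2 hx)
  refine (((hasDerivAt_id' x).mul (hasDerivAt_exp x)).div
    ((hasDerivAt_exp x).sub_const 1) hne).congr_deriv ?_
  simp only [Pi.mul_apply]
  ring

lemma strictMonoOn_mul_exp_div_exp_sub_one :
    StrictMonoOn (fun u => u * exp u / (exp u - 1)) (Ioi 0) := by
  refine strictMonoOn_of_deriv_pos (convex_Ioi 0) (fun x hx => ?_) (fun x hx => ?_)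
  · exact (hasDerivAt_mul_exp_div_exp_sub_one (ne_of_gt hx)).continuousAt.continuousWithinAt
  · rw [interior_Ioi, mem_Ioi] at hx
    rw [(hasDerivAt_mul_exp_div_exp_sub_one hx.ne').deriv]
    have hexp := add_one_lt_exp hx.ne'
    exact div_pos (mul_pos (exp_pos x) (by linarith)) (pow_pos (by linarith) 2)

lemma exists_pos_mul_exp_div_exp_sub_one_eq {y : ℝ} (hy : 1 < y) :
    ∃ u, 0 < u ∧ u * exp u / (exp u - 1) = y := by
  have hlog : 0 < log y := log_pos hy
  have hlog_le : log y ≤ y - 1 := log_le_sub_one_of_pos (by linarith)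
  have hcont : ContinuousOn (fun u => u * exp u / (exp u - 1)) (Icc (log y) y) := fun x hx =>
    (hasDerivAt_mul_exp_div_exp_sub_one (hlog.trans_le hx.1).ne').continuousAt.continuousWithinAt
  have hleft : log y * exp (log y) / (exp (log y) - 1) ≤ y := by
    rw [exp_log (by linarith), div_le_iff₀ (by linarith)]
    nlinarith
  have hright : y ≤ y * exp y / (exp y - 1) := by
    have hexp := add_one_lt_exp (show y ≠ 0 by linarith)
    rw [le_div_iff₀ (by linarith)]
    nlinarith
  obtain ⟨u, hu, hgu⟩ := intermediate_value_Icc (by linarith) hcont ⟨hleft, hright⟩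
  exact ⟨u, hlog.trans_le hu.1, hgu⟩

lemma existsUnique_pos_mul_exp_mul_div_eq {lam K : ℝ} (hlam : 0 < lam) (hK : 1 / lam < K) :
    ∃! t, 0 < t ∧ t * exp (lam * t) / (exp (lam * t) - 1) = K := by
  have hscale : ∀ t, t * exp (lam * t) / (exp (lam * t) - 1) = K ↔
      lam * t * exp (lam * t) / (exp (lam * t) - 1) = lam * K := fun t => by
    rw [mul_assoc, mul_div_assoc, mul_div_assoc, mul_right_inj' hlam.ne', mul_div_assoc]
  have hlamK : 1 < lam * K := by rwa [div_lt_iff₀' hlam] at hK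
  obtain ⟨u, hu, hgu⟩ := exists_pos_mul_exp_div_exp_sub_one_eq hlamK
  refine ⟨u / lam, ⟨div_pos hu hlam, ?_⟩, fun t ⟨ht, htK⟩ => ?_⟩
  · rwa [hscale, mul_div_cancel₀ _ hlam.ne']
  · have hlamt : lam * t = u := strictMonoOn_mul_exp_div_exp_sub_one.injOn
      (mul_pos hlam ht) hu (((hscale t).1 htK).trans hgu.symm)
    rw [← hlamt, mul_div_cancel_left₀ _ hlam.ne']

lemma optimality_conditions_iff {κ c₁ d β₁ β₂ μ : ℝ} (hκ : 0 < κ) (hc₁ : 0 ≤ c₁) (hd : 0 < d)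
    (hβ₁ : 0 ≤ β₁) :
    (β₁ ^ 2 - 1 / κ * (β₁ - μ) ^ 2 = c₁ ∧ 1 / κ * (β₂ - μ) ^ 2 = d ∧ μ < β₂) ↔
      (β₂ - μ = √(d * κ) ∧ β₁ = √(c₁ + 1 / κ * ((β₂ - β₁) - √(d * κ)) ^ 2)) := by
  have hβ₁μ : β₁ - μ = -((β₂ - β₁) - (β₂ - μ)) := by ring
  rw [hβ₁μ, neg_sq]
  constructor
  · rintro ⟨h₁, h₂, hμ⟩
    have ha : β₂ - μ = √(d * κ) := by
      rw [eq_comm, sqrt_eq_iff_mul_self_eq_of_pos (sub_pos.2 hμ), ← h₂]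
      field_simp
    rw [ha] at h₁
    refine ⟨ha, ?_⟩
    rw [show c₁ + 1 / κ * ((β₂ - β₁) - √(d * κ)) ^ 2 = β₁ ^ 2 by linarith, sqrt_sq hβ₁]
  · rintro ⟨ha, hβ⟩
    have hβsq : β₁ ^ 2 = c₁ + 1 / κ * ((β₂ - β₁) - √(d * κ)) ^ 2 := by
      calc β₁ ^ 2 = √(c₁ + 1 / κ * ((β₂ - β₁) - √(d * κ)) ^ 2) ^ 2 := by rw [← hβ]
        _ = _ := sq_sqrt (by positivity)
    refine ⟨by rw [ha]; linarith, ?_, ?_⟩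
    · rw [ha, sq_sqrt (by positivity)]
      field_simp
    · have := sqrt_pos.2 (mul_pos hd hκ)
      linarith

lemma existsUnique_pair_of_existsUnique_gap {P : ℝ → Prop} {h : ℝ → ℝ}
    (hP : ∃! t, 0 < t ∧ P t) (hh : ∀ t, 0 ≤ h t) :
    ∃! q : ℝ × ℝ, 0 ≤ q.1 ∧ q.1 < q.2 ∧ P (q.2 - q.1) ∧ q.1 = h (q.2 - q.1) := by
  obtain ⟨t, ⟨ht, hPt⟩, huniq⟩ := hP
  refine ⟨(h t, h t + t), ⟨hh t, by simpa using ht, by simpa using hPt, by simp⟩, ?_⟩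
  rintro ⟨a, b⟩ ⟨-, hab, hPab, ha⟩
  have hgap : b - a = t := huniq _ ⟨sub_pos.2 hab, hPab⟩
  simp only at ha hgap
  rw [hgap] at ha
  ext
  · exact ha
  · simp only
    linarith

theorem stmt_12 (lam γ c₁ c₂ : ℝ) (hlam : 0 < lam) (hγ : 0 < γ)
    (hc₁ : 0 ≤ c₁) (hc : c₁ < c₂) :
    (∀ β₁ β₂ : ℝ, 0 ≤ β₁ → β₁ < β₂ →
      (((β₁^2 - (1/(1+γ)) *
          (β₁ - (β₁ + 1/lam - (β₂ - β₁)/(Real.exp (lam*(β₂ - β₁)) - 1)))^2 = c₁) ∧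
        ((1/(1+γ)) *
          (β₂ - (β₁ + 1/lam - (β₂ - β₁)/(Real.exp (lam*(β₂ - β₁)) - 1)))^2 = c₂ - c₁) ∧
        ((β₁ + 1/lam - (β₂ - β₁)/(Real.exp (lam*(β₂ - β₁)) - 1)) < β₂))
       ↔
       (((β₂ - β₁) * Real.exp (lam*(β₂ - β₁)) / (Real.exp (lam*(β₂ - β₁)) - 1)
          = 1/lam + Real.sqrt ((c₂ - c₁)*(1+γ))) ∧
        (β₁ = Real.sqrt (c₁ + (1/(1+γ)) *
          ((β₂ - β₁) - Real.sqrt ((c₂ - c₁)*(1+γ)))^2))))) ∧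
    (∃! q : ℝ × ℝ, 0 ≤ q.1 ∧ q.1 < q.2 ∧
      ((q.2 - q.1) * Real.exp (lam*(q.2 - q.1)) / (Real.exp (lam*(q.2 - q.1)) - 1)
        = 1/lam + Real.sqrt ((c₂ - c₁)*(1+γ))) ∧
      (q.1 = Real.sqrt (c₁ + (1/(1+γ)) *
        ((q.2 - q.1) - Real.sqrt ((c₂ - c₁)*(1+γ)))^2))) := by
  have hd : 0 < c₂ - c₁ := sub_pos.2 hc
  have hκ : 0 < 1 + γ := by linarith
  refine ⟨fun β₁ β₂ hβ₁ hlt => ?_, existsUnique_pair_of_existsUnique_gap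
    (h := fun t => √(c₁ + 1 / (1 + γ) * (t - √((c₂ - c₁) * (1 + γ))) ^ 2))
    (existsUnique_pos_mul_exp_mul_div_eq hlam
      (lt_add_of_pos_right _ (sqrt_pos.2 (mul_pos hd hκ)))) fun _ => sqrt_nonneg _⟩
  have hE : exp (lam * (β₂ - β₁)) - 1 ≠ 0 :=
    sub_ne_zero.2 ((one_lt_exp_iff.2 (mul_pos hlam (sub_pos.2 hlt))).ne')
  have hgap : β₂ - (β₁ + 1 / lam - (β₂ - β₁) / (exp (lam * (β₂ - β₁)) - 1)) =
      (β₂ - β₁) * exp (lam * (β₂ - β₁)) / (exp (lam * (β₂ - β₁)) - 1) - 1 / lam := by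
    field_simp
    ring
  rw [optimality_conditions_iff hκ hc₁ hd hβ₁, hgap, sub_eq_iff_eq_add']
end
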